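/- Fix a base b ≥ 3 and constants m, C₁ > 0. Suppose i ∈ ℕ satisfies (5/2)·bⁿ < C₁·i^m ≤ (8/3)·bⁿ for some n ∈ ℕ, and let a_i = C₁·i^m·c_i with c_i ∈ [-1,1], c_i ≠ 0. If |a_i| begins with the digit 1 in base b, then there exists a nonnegative integer j such that (3/8)·b^{−j} ≤ |c_i| ≤ (4/5)·b^{−j}. -/
import Mathlib


/-- For `b ≥ 3`, if `(5/2)·bⁿ < C₁·i^m ≤ (8/3)·bⁿ`, `a = C₁·i^m·c` with `c ∈ [-1,1]` nonzero,
and `|a|` begins with the digit 1 in base `b` (i.e. `b^t ≤ |a| < 2·b^t` for some `t ∈ ℤ`),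
then there is a nonnegative integer `j` with `(3/8)·b^{-j} ≤ |c| ≤ (4/5)·b^{-j}`. -/
theorem interval_of_begins_with_one
    (b : ℕ) (hb : 3 ≤ b) (m C₁ : ℝ) (hm : 0 < m) (hC₁ : 0 < C₁)
    (n i : ℕ)
    (hi : 5 / 2 * (b : ℝ) ^ n < C₁ * (i : ℝ) ^ m)
    (hi' : C₁ * (i : ℝ) ^ m ≤ 8 / 3 * (b : ℝ) ^ n)
    (c : ℝ) (hc : c ∈ Set.Icc (-1 : ℝ) 1) (hc0 : c ≠ 0)
    (a : ℝ) (ha : a = C₁ * (i : ℝ) ^ m * c)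
    (hbegin : ∃ t : ℤ, (b : ℝ) ^ t ≤ |a| ∧ |a| < 2 * (b : ℝ) ^ t) :
    ∃ j : ℕ, 3 / 8 * (b : ℝ) ^ (-(j : ℤ)) ≤ |c| ∧ |c| ≤ 4 / 5 * (b : ℝ) ^ (-(j : ℤ)) := by
  obtain ⟨t, ht1, ht2⟩ := hbegin
  have hb3 : (3:ℝ) ≤ (b:ℝ) := by exact_mod_cast hb
  have hb0 : (0:ℝ) < b := by linarith
  have hbn : (0:ℝ) < (b:ℝ)^n := by positivity
  have hK : (0:ℝ) < C₁ * (i:ℝ)^m := lt_trans (by positivity) hi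
  have habs : |a| = C₁ * (i:ℝ)^m * |c| := by
    rw [ha, abs_mul, abs_of_pos hK]
  have hc1 : |c| ≤ 1 := abs_le.2 ⟨hc.1, hc.2⟩
  have hcpos : 0 < |c| := abs_pos.2 hc0
  set P : ℝ := (b:ℝ) ^ (t - (n:ℤ)) with hP
  have hPpos : 0 < P := zpow_pos hb0 _
  have hPQ : P * (b:ℝ)^n = (b:ℝ)^t := by
    rw [hP, ← zpow_natCast (b:ℝ) n, ← zpow_add₀ (ne_of_gt hb0)]
    ring_nf
  rw [habs] at ht1 ht2
  -- lower bound
  have hlow : 3/8 * P ≤ |c| := by nlinarith [abs_nonneg c]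
  -- upper bound
  have hupp : |c| ≤ 4/5 * P := by nlinarith
  -- t ≤ n
  have htn : t ≤ (n:ℤ) := by
    by_contra h
    push_neg at h
    have h1 : (1:ℤ) ≤ t - (n:ℤ) := by omega
    have : (b:ℝ)^(1:ℤ) ≤ P := zpow_le_zpow_right₀ (by linarith) h1
    rw [zpow_one] at this
    nlinarith
  refine ⟨((n:ℤ) - t).toNat, ?_, ?_⟩ <;>
  · rw [show -((((n:ℤ) - t).toNat : ℤ)) = t - (n:ℤ) by
      rw [Int.toNat_of_nonneg (by omega)]; ring]
    first | exact hlow | exact hupp
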